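/- Let P be a disjunctive program, V a valuation, and π ∈ S^s_{(P,V)} a minimally specific possibilistic model of the strong constraints induced by P and V such that V(l) = N(l) for every l ∈ Lit_P and N(l) ∈ {0,1} for every l ∈ Lit_P. Then M = {l ∈ Lit_P : N(l) = 1} is an answer set of the disjunctive program P. -/
import Mathlib


open Classical

namespace PASP

/-- An interpretation assigns a truth value to each atom. -/
abbrev Interp (A : Type) := A → Bool

/-- A literal is an atom with a sign (`true` = positive, `false` = classical negation). -/
abbrev Lit (A : Type) := A × Bool

/-- A possibility distribution on interpretations. -/
abbrev PossDist (A : Type) := Interp A → ℝ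

variable {A : Type}

def litSat (ω : Interp A) (l : Lit A) : Prop := ω l.1 = l.2

def IsPossDist (π : PossDist A) : Prop := ∀ ω, 0 ≤ π ω ∧ π ω ≤ 1

noncomputable def poss (π : PossDist A) (p : Interp A → Prop) : ℝ :=
  sSup {x | ∃ ω, p ω ∧ π ω = x}

noncomputable def nec (π : PossDist A) (p : Interp A → Prop) : ℝ :=
  1 - poss π fun ω => ¬ p ω

noncomputable def necLit (π : PossDist A) (l : Lit A) : ℝ :=
  nec π fun ω => litSat ω l

def Consistent (M : Set (Lit A)) : Prop :=
  ∀ a : A, ¬ ((a, true) ∈ M ∧ (a, false) ∈ M)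

def MinSpecific (S : Set (PossDist A)) (π : PossDist A) : Prop :=
  π ∈ S ∧ ∀ π' ∈ S, π ≤ π' → π' = π


/-- A disjunctive rule `l₀;…;l_k ← l_{k+1},…,l_m, not l_{m+1},…, not l_n`;
an empty head stands for a constraint rule. -/
structure DisjRule (A : Type) where
  head : Finset (Lit A)
  pos : Finset (Lit A)
  neg : Finset (Lit A)

/-- A positive disjunctive rule `l₀;…;l_k ← l_{k+1},…,l_m`. -/
structure PosDisjRule (A : Type) where
  head : Finset (Lit A)
  body : Finset (Lit A)

/-- A consistent set of literals `I` is a model of a positive disjunctive rule if its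
head intersects `I` or its body is not contained in `I`. -/
def posRuleModel (I : Set (Lit A)) (r : PosDisjRule A) : Prop :=
  (↑r.body : Set (Lit A)) ⊆ I → ∃ l ∈ r.head, l ∈ I

/-- Models of a positive disjunctive program: consistent models of all rules, together
with the set of all literals itself. -/
def IsModelD (P : Set (PosDisjRule A)) (I : Set (Lit A)) : Prop :=
  (Consistent I ∧ ∀ r ∈ P, posRuleModel I r) ∨ I = Set.univ

/-- An answer set of a positive disjunctive program is a minimal model w.r.t. `⊆`. -/
def IsAnswerSetD (P : Set (PosDisjRule A)) (I : Set (Lit A)) : Prop :=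
  IsModelD P I ∧ ∀ J, IsModelD P J → J ⊆ I → J = I

/-- The Gelfond–Lifschitz reduct of a disjunctive program. -/
def dreduct (P : Set (DisjRule A)) (I : Set (Lit A)) : Set (PosDisjRule A) :=
  {s | ∃ r ∈ P, (∀ l ∈ r.neg, l ∉ I) ∧ s = ⟨r.head, r.pos⟩}

/-- `M` is an answer set of the disjunctive program `P` when it is an answer set of the
positive disjunctive program `P^M`. -/
def DisjAnswerSet (P : Set (DisjRule A)) (M : Set (Lit A)) : Prop :=
  IsAnswerSetD (dreduct P M) M

/-- A valuation maps every literal into `[0,1]`. -/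
def IsVal (V : Lit A → ℝ) : Prop := ∀ l, 0 ≤ V l ∧ V l ≤ 1

/-- `max(N(l₀),…,N(l_k))` over the head; an empty head is read as `N(⊥) = 1 − Π(⊤)`. -/
noncomputable def headMax (π : PossDist A) (H : Finset (Lit A)) : ℝ :=
  if H.Nonempty then sSup (necLit π '' (↑H : Set (Lit A))) else nec π fun _ => False

/-- `min(N(l₁),…,N(l_m))`, the minimum of the empty list being 1. -/
noncomputable def minBody (π : PossDist A) (B : Finset (Lit A)) : ℝ :=
  sInf (insert 1 (necLit π '' (↑B : Set (Lit A))))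

/-- `min(1 − V(l_{m+1}),…,1 − V(l_n))`, the minimum of the empty list being 1. -/
noncomputable def minNeg (V : Lit A → ℝ) (B : Finset (Lit A)) : ℝ :=
  sInf (insert 1 ((fun l => 1 - V l) '' (↑B : Set (Lit A))))

/-- The strong constraint
`max(N(l₀),…,N(l_k)) ≥ min(N(l_{k+1}),…,N(l_m), 1−V(l_{m+1}),…,1−V(l_n))`. -/
def strongConstraint (π : PossDist A) (V : Lit A → ℝ) (r : DisjRule A) : Prop :=
  min (minBody π r.pos) (minNeg V r.neg) ≤ headMax π r.head

/-- The possibility distributions satisfying the strong constraints of `P` and `V`. -/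
def strongModels (P : Set (DisjRule A)) (V : Lit A → ℝ) : Set (PossDist A) :=
  {π | IsPossDist π ∧ ∀ r ∈ P, strongConstraint π V r}

section Aux
set_option linter.unusedSectionVars false

variable [Finite A]

lemma possSet_finite (π : PossDist A) (p : Interp A → Prop) :
    {x | ∃ ω, p ω ∧ π ω = x}.Finite := by
  have h : {x | ∃ ω, p ω ∧ π ω = x} = π '' {ω | p ω} := rfl
  rw [h]
  exact (Set.toFinite _).image π

lemma le_poss (π : PossDist A) {p : Interp A → Prop} {ω : Interp A} (h : p ω) :
    π ω ≤ poss π p :=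
  le_csSup (possSet_finite π p).bddAbove ⟨ω, h, rfl⟩

lemma poss_le (π : PossDist A) {p : Interp A → Prop} {c : ℝ} (hc : 0 ≤ c)
    (h : ∀ ω, p ω → π ω ≤ c) : poss π p ≤ c :=
  Real.sSup_le (by rintro x ⟨ω, hω, rfl⟩; exact h ω hω) hc

lemma poss_nonneg {π : PossDist A} (hπ : IsPossDist π) (p : Interp A → Prop) :
    0 ≤ poss π p := by
  by_cases h : ∃ ω, p ω
  · obtain ⟨ω, hω⟩ := h
    exact le_trans (hπ ω).1 (le_poss π hω)
  · have he : {x | ∃ ω, p ω ∧ π ω = x} = ∅ := by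
      ext x
      simp only [Set.mem_setOf_eq, Set.mem_empty_iff_false, iff_false]
      rintro ⟨ω, hω, -⟩
      exact h ⟨ω, hω⟩
    unfold poss
    rw [he, Real.sSup_empty]

lemma poss_le_one {π : PossDist A} (hπ : IsPossDist π) (p : Interp A → Prop) :
    poss π p ≤ 1 :=
  poss_le π zero_le_one fun ω _ => (hπ ω).2

lemma nec_nonneg {π : PossDist A} (hπ : IsPossDist π) (p : Interp A → Prop) :
    0 ≤ nec π p := by
  have := poss_le_one hπ (fun ω => ¬ p ω)
  unfold nec
  linarith

lemma necLit_eq_one_iff {π : PossDist A} (hπ : IsPossDist π) (l : Lit A) :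
    necLit π l = 1 ↔ ∀ ω, ¬ litSat ω l → π ω = 0 := by
  unfold necLit nec
  constructor
  · intro h ω hω
    have hposs : poss π (fun ω => ¬ litSat ω l) = 0 := by linarith
    exact le_antisymm (hposs ▸ le_poss π hω) (hπ ω).1
  · intro h
    have hposs : poss π (fun ω => ¬ litSat ω l) = 0 :=
      le_antisymm (poss_le π le_rfl fun ω hω => (h ω hω).le) (poss_nonneg hπ _)
    rw [hposs]; ring

lemma minBody_le_one (π : PossDist A) (B : Finset (Lit A)) : minBody π B ≤ 1 :=
  csInf_le (((B.finite_toSet.image _).insert 1).bddBelow) (Set.mem_insert _ _)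

lemma minBody_le (π : PossDist A) {B : Finset (Lit A)} {l : Lit A} (h : l ∈ B) :
    minBody π B ≤ necLit π l :=
  csInf_le (((B.finite_toSet.image _).insert 1).bddBelow)
    (Set.mem_insert_of_mem _ ⟨l, h, rfl⟩)

lemma one_le_minBody (π : PossDist A) {B : Finset (Lit A)}
    (h : ∀ l ∈ B, 1 ≤ necLit π l) : 1 ≤ minBody π B := by
  refine le_csInf ⟨1, Set.mem_insert _ _⟩ ?_
  rintro x (rfl | ⟨l, hl, rfl⟩)
  · exact le_rfl
  · exact h l hl

lemma minNeg_le_one (V : Lit A → ℝ) (B : Finset (Lit A)) : minNeg V B ≤ 1 :=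
  csInf_le (((B.finite_toSet.image _).insert 1).bddBelow) (Set.mem_insert _ _)

lemma minNeg_le (V : Lit A → ℝ) {B : Finset (Lit A)} {l : Lit A} (h : l ∈ B) :
    minNeg V B ≤ 1 - V l :=
  csInf_le (((B.finite_toSet.image _).insert 1).bddBelow)
    (Set.mem_insert_of_mem _ ⟨l, h, rfl⟩)

lemma one_le_minNeg (V : Lit A → ℝ) {B : Finset (Lit A)}
    (h : ∀ l ∈ B, 1 ≤ 1 - V l) : 1 ≤ minNeg V B := by
  refine le_csInf ⟨1, Set.mem_insert _ _⟩ ?_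
  rintro x (rfl | ⟨l, hl, rfl⟩)
  · exact le_rfl
  · exact h l hl

lemma le_headMax (π : PossDist A) {H : Finset (Lit A)} {l : Lit A} (h : l ∈ H) :
    necLit π l ≤ headMax π H := by
  rw [headMax, if_pos ⟨l, h⟩]
  exact le_csSup (H.finite_toSet.image _).bddAbove ⟨l, h, rfl⟩

lemma headMax_nonneg {π : PossDist A} (hπ : IsPossDist π) (H : Finset (Lit A)) :
    0 ≤ headMax π H := by
  by_cases hH : H.Nonempty
  · obtain ⟨l, hl⟩ := hH
    exact le_trans (nec_nonneg hπ _) (le_headMax π hl)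
  · rw [headMax, if_neg hH]
    exact nec_nonneg hπ _

lemma sat_of_consistent {I : Set (Lit A)} (hI : Consistent I) :
    ∃ ω : Interp A, ∀ l ∈ I, litSat ω l := by
  refine ⟨fun a => if (a, true) ∈ I then true else false, ?_⟩
  rintro ⟨a, b⟩ hl
  cases b
  · show (if (a, true) ∈ I then true else false) = false
    rw [if_neg]
    intro h
    exact hI a ⟨h, hl⟩
  · show (if (a, true) ∈ I then true else false) = true
    rw [if_pos hl]

lemma extend_consistent {J : Set (Lit A)} (hJ : Consistent J) {l : Lit A}
    (hl : l ∉ J) : Consistent (insert (l.1, !l.2) J) := by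
  rintro a ⟨h1, h2⟩
  rcases h1 with h1 | h1 <;> rcases h2 with h2 | h2
  · rw [Prod.ext_iff] at h1 h2
    have := h1.2.trans h2.2.symm
    simp at this
  · rw [Prod.ext_iff] at h1
    obtain ⟨ha, hb⟩ := h1
    apply hl
    have hb2 : l.2 = false := by cases hb' : l.2 <;> simp [hb'] at hb ⊢
    have : l = (a, false) := Prod.ext ha.symm hb2
    rw [this]; exact h2
  · rw [Prod.ext_iff] at h2
    obtain ⟨ha, hb⟩ := h2
    apply hl
    have hb2 : l.2 = true := by cases hb' : l.2 <;> simp [hb'] at hb ⊢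
    have : l = (a, true) := Prod.ext ha.symm hb2
    rw [this]; exact h1
  · exact hJ a ⟨h1, h2⟩

/-- The "bumped" distribution used in the minimality argument. -/
noncomputable def bump (π : PossDist A) (J : Set (Lit A)) : PossDist A :=
  fun ω => if ∀ l ∈ J, litSat ω l then 1 else π ω

lemma bump_isPossDist {π : PossDist A} (hπ : IsPossDist π) (J : Set (Lit A)) :
    IsPossDist (bump π J) := by
  intro ω
  unfold bump
  split
  · exact ⟨zero_le_one, le_rfl⟩
  · exact hπ ω

lemma le_bump {π : PossDist A} (hπ : IsPossDist π) (J : Set (Lit A)) :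
    π ≤ bump π J := by
  intro ω
  unfold bump
  split
  · exact (hπ ω).2
  · exact le_rfl

end Aux

/-- if `π ∈ S^s_(P,V)` is a minimally specific possibilistic model of the
strong constraints induced by the disjunctive program `P` and valuation `V`, with
`V(l) = N(l)` and `N(l) ∈ {0,1}` for every literal, then `M = {l : N(l) = 1}` is an
answer set of `P`. -/
theorem stmt5 {A : Type} [Fintype A] (P : Set (DisjRule A)) (V : Lit A → ℝ)
    (hV : IsVal V) (π : PossDist A)
    (hπ : MinSpecific (strongModels P V) π)
    (hstab : ∀ l : Lit A, V l = necLit π l)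
    (hcrisp : ∀ l : Lit A, necLit π l = 0 ∨ necLit π l = 1) :
    DisjAnswerSet P {l : Lit A | necLit π l = 1} := by
  classical
  set M : Set (Lit A) := {l : Lit A | necLit π l = 1} with hMdef
  have hπd : IsPossDist π := hπ.1.1
  have hconstr : ∀ r ∈ P, strongConstraint π V r := hπ.1.2
  have hMval : ∀ l : Lit A, l ∉ M → necLit π l = 0 := by
    intro l hl
    rcases hcrisp l with h | h
    · exact h
    · exact absurd h hl
  have hzero : ∀ l ∈ M, ∀ ω, ¬ litSat ω l → π ω = 0 := by
    intro l hl ω hω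
    exact (necLit_eq_one_iff hπd l).mp hl ω hω
  have hUnivOfZero : (∀ ω, π ω = 0) → M = Set.univ := by
    intro h
    apply Set.eq_univ_iff_forall.mpr
    intro l
    exact (necLit_eq_one_iff hπd l).mpr fun ω _ => h ω
  have hConsOf : M ≠ Set.univ → Consistent M := by
    intro hne
    by_contra hc
    unfold Consistent at hc
    push_neg at hc
    obtain ⟨a, h1, h2⟩ := hc
    apply hne
    apply hUnivOfZero
    intro ω
    cases hb : ω a
    · exact hzero (a, true) h1 ω (by simp [litSat, hb])
    · exact hzero (a, false) h2 ω (by simp [litSat, hb])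
  constructor
  · -- M is a model of the reduct
    by_cases hMu : M = Set.univ
    · exact Or.inr hMu
    · refine Or.inl ⟨hConsOf hMu, ?_⟩
      rintro s ⟨r, hrP, hrneg, rfl⟩ hbody
      have h1 : minBody π r.pos = 1 := by
        refine le_antisymm (minBody_le_one π _) (one_le_minBody π ?_)
        intro l hl
        exact (hbody hl).ge
      have h2 : minNeg V r.neg = 1 := by
        refine le_antisymm (minNeg_le_one V _) (one_le_minNeg V ?_)
        intro l hl
        rw [hstab l, hMval l (hrneg l hl)]
        norm_num
      have h3 : (1 : ℝ) ≤ headMax π r.head := by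
        have hc := hconstr r hrP
        unfold strongConstraint at hc
        rw [h1, h2] at hc
        simpa using hc
      by_cases hH : r.head.Nonempty
      · by_contra hno
        push_neg at hno
        have hle0 : headMax π r.head ≤ 0 := by
          rw [headMax, if_pos hH]
          refine Real.sSup_le ?_ le_rfl
          rintro x ⟨l, hl, rfl⟩
          exact (hMval l (hno l hl)).le
        linarith
      · exfalso
        rw [headMax, if_neg hH] at h3
        unfold nec at h3
        have hp0 : poss π (fun ω => ¬ False) ≤ 0 := by linarith
        apply hMu
        apply hUnivOfZero
        intro ω
        have := le_poss π (p := fun ω => ¬ False) (ω := ω) not_false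
        exact le_antisymm (this.trans hp0) (hπd ω).1
  · -- minimality
    intro J hJ hJM
    by_cases hMJ : M ⊆ J
    · exact hJM.antisymm hMJ
    obtain ⟨l₀, hl₀M, hl₀J⟩ := Set.not_subset.mp hMJ
    rcases hJ with ⟨hJc, hJr⟩ | hJu
    · exfalso
      -- build satisfying interpretation for J ∪ {¬l₀}
      have hJ'c : Consistent (insert (l₀.1, !l₀.2) J) := extend_consistent hJc hl₀J
      obtain ⟨ω₀, hω₀⟩ := sat_of_consistent hJ'c
      have hω₀J : ∀ l ∈ J, litSat ω₀ l := fun l hl => hω₀ l (Set.mem_insert_of_mem _ hl)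
      have hω₀l : ¬ litSat ω₀ l₀ := by
        have h := hω₀ _ (Set.mem_insert _ _)
        unfold litSat at h ⊢
        simp only at h
        rw [h]
        cases l₀.2 <;> simp
      set π' : PossDist A := bump π J with hπ'def
      have hπ'd : IsPossDist π' := bump_isPossDist hπd J
      have hle : π ≤ π' := le_bump hπd J
      have hnec1 : ∀ l ∈ J, necLit π' l = 1 := by
        intro l hl
        refine (necLit_eq_one_iff hπ'd l).mpr ?_
        intro ω hns
        rw [hπ'def]
        unfold bump
        rw [if_neg (fun hall => hns (hall l hl))]
        exact hzero l (hJM hl) ω hns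
      have hnec0 : ∀ l : Lit A, l ∉ J → necLit π' l = 0 := by
        intro l hl
        have hc : Consistent (insert (l.1, !l.2) J) := extend_consistent hJc hl
        obtain ⟨ω, hω⟩ := sat_of_consistent hc
        have hωJ : ∀ l' ∈ J, litSat ω l' := fun l' hl' => hω l' (Set.mem_insert_of_mem _ hl')
        have hωl : ¬ litSat ω l := by
          have h := hω _ (Set.mem_insert _ _)
          unfold litSat at h ⊢
          simp only at h
          rw [h]
          cases l.2 <;> simp
        have hb : π' ω = 1 := by
          rw [hπ'def]
          unfold bump
          rw [if_pos hωJ]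
        have hposs : poss π' (fun ω => ¬ litSat ω l) = 1 := by
          refine le_antisymm (poss_le_one hπ'd _) ?_
          calc (1:ℝ) = π' ω := hb.symm
            _ ≤ _ := le_poss π' hωl
        unfold necLit nec
        rw [hposs]; ring
      have hsc : ∀ r ∈ P, strongConstraint π' V r := by
        intro r hr
        unfold strongConstraint
        have h0 : (0:ℝ) ≤ headMax π' r.head := headMax_nonneg hπ'd _
        by_cases hp : (↑r.pos : Set (Lit A)) ⊆ J
        · by_cases hn : ∀ l ∈ r.neg, l ∉ M
          · have hs : (⟨r.head, r.pos⟩ : PosDisjRule A) ∈ dreduct P M := ⟨r, hr, hn, rfl⟩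
            obtain ⟨l, hlh, hlJ⟩ := hJr _ hs hp
            calc min (minBody π' r.pos) (minNeg V r.neg) ≤ minBody π' r.pos :=
                  min_le_left _ _
              _ ≤ 1 := minBody_le_one π' _
              _ = necLit π' l := (hnec1 l hlJ).symm
              _ ≤ headMax π' r.head := le_headMax π' hlh
          · push_neg at hn
            obtain ⟨l, hl, hlM⟩ := hn
            have hV : V l = 1 := by rw [hstab l]; exact hlM
            calc min (minBody π' r.pos) (minNeg V r.neg) ≤ minNeg V r.neg :=
                  min_le_right _ _
              _ ≤ 1 - V l := minNeg_le V hl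
              _ = 0 := by rw [hV]; ring
              _ ≤ headMax π' r.head := h0
        · obtain ⟨l, hl, hlJ⟩ := Set.not_subset.mp hp
          calc min (minBody π' r.pos) (minNeg V r.neg) ≤ minBody π' r.pos :=
                min_le_left _ _
            _ ≤ necLit π' l := minBody_le π' hl
            _ = 0 := hnec0 l hlJ
            _ ≤ headMax π' r.head := h0
      have heq : π' = π := hπ.2 π' ⟨hπ'd, hsc⟩ hle
      have h1 : π' ω₀ = 1 := by
        rw [hπ'def]
        unfold bump
        rw [if_pos hω₀J]
      have h0' : π ω₀ = 0 := hzero l₀ hl₀M ω₀ hω₀l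
      rw [heq, h0'] at h1
      exact zero_ne_one h1
    · exfalso
      rw [hJu] at hl₀J
      exact hl₀J (Set.mem_univ l₀)

end PASP
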